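/- Let A₁, A₂ be finite nonempty sets, Q : A₁ × A₂ → ℝ with max_{a₁,a₂} |Q(a₁,a₂)| ≤ B, η > 0, and π₁ʳᵉᶠ ∈ Δ(A₁), π₂ʳᵉᶠ ∈ Δ(A₂) strictly positive. Let (μ̂, ν̂) be the unique saddle point of the KL-regularized objective J_Q, and let (π₁⁽ᵗ⁾, π₂⁽ᵗ⁾) be the SOS-MD iterates with stepsizes γ_t = 2η/(t+2). Then for every T ≥ 1: KL(μ̂‖π₁⁽ᵀ⁾) + KL(ν̂‖π₂⁽ᵀ⁾) ≤ 36·η²·B² / (T+1). -/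

import Mathlib

/-!
The saddle point is the Gibbs fixed point `μ̂ ∝ π₁ʳᵉᶠ · exp (η Q ν̂)`,
`ν̂ ∝ π₂ʳᵉᶠ · exp (-η Qᵀ μ̂)`.
Taking logarithms, one SOS-MD step of each player is an exponential tilting of the current iterate
`π` by `γ (q - η⁻¹ log (π / πʳᵉᶠ))`, where `q` is the payoff vector against the opponent's iterate.
By Hoeffding's lemma, tilting by a function with range of width `w` decreases `KL(μ̂‖·)` by the
linear term `Σ (μ̂ - π) · (tilt exponent)` up to an error `w² / 8`. The iterates keep
`log (π / πʳᵉᶠ)` inside an interval of length `2ηB`, so `w ≤ 4γB`. Adding up the two players, the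
bilinear parts of the linear terms cancel because the game is zero-sum, and the regularization
parts contribute `-γ/η · (KL(μ̂‖π₁) + KL(π₁‖μ̂) + KL(ν̂‖π₂) + KL(π₂‖ν̂))`. Hence
`D_{t+1} ≤ (1 - γ_t/η) D_t + 4 γ_t² B²` for `D_t = KL(μ̂‖π₁⁽ᵗ⁾) + KL(ν̂‖π₂⁽ᵗ⁾)`, and with
`γ_t = 2η/(t+2)` this recursion gives `D_T ≤ 16 η² B² / (T+1)`.
-/

open Finset

/-- The probability simplex on a finite type: nonnegative entries summing to one. -/
def IsSimplex {A : Type*} [Fintype A] (p : A → ℝ) : Prop :=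
  (∀ a, 0 ≤ p a) ∧ ∑ a, p a = 1

/-- KL divergence between two distributions on a finite type
(with the convention `0 * log 0 = 0`, which holds in Lean since `Real.log 0 = 0`). -/
noncomputable def KLdiv {A : Type*} [Fintype A] (p q : A → ℝ) : ℝ :=
  ∑ a, p a * Real.log (p a / q a)

/-- The KL-regularized zero-sum game objective. -/
noncomputable def J {A₁ A₂ : Type*} [Fintype A₁] [Fintype A₂]
    (G : A₁ × A₂ → ℝ) (η : ℝ) (π₁ref : A₁ → ℝ) (π₂ref : A₂ → ℝ)
    (μ : A₁ → ℝ) (ν : A₂ → ℝ) : ℝ :=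
  (∑ a₁, ∑ a₂, μ a₁ * ν a₂ * G (a₁, a₂))
    - η⁻¹ * KLdiv μ π₁ref + η⁻¹ * KLdiv ν π₂ref

/-- `(μs, νs)` is a saddle point of `J_G` over the product of simplices. -/
def IsSaddle {A₁ A₂ : Type*} [Fintype A₁] [Fintype A₂]
    (G : A₁ × A₂ → ℝ) (η : ℝ) (π₁ref : A₁ → ℝ) (π₂ref : A₂ → ℝ)
    (μs : A₁ → ℝ) (νs : A₂ → ℝ) : Prop :=
  IsSimplex μs ∧ IsSimplex νs ∧
  (∀ μ : A₁ → ℝ, IsSimplex μ → J G η π₁ref π₂ref μ νs ≤ J G η π₁ref π₂ref μs νs) ∧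
  (∀ ν : A₂ → ℝ, IsSimplex ν → J G η π₁ref π₂ref μs νs ≤ J G η π₁ref π₂ref μs ν)

/-- The SOS-MD self-play iterates: initialization at the reference policies and
normalized multiplicative (mirror-descent) updates with stepsizes `γ_t`. -/
def IsSOSMD {A₁ A₂ : Type*} [Fintype A₁] [Fintype A₂]
    (Q : A₁ × A₂ → ℝ) (η : ℝ) (π₁ref : A₁ → ℝ) (π₂ref : A₂ → ℝ)
    (γ : ℕ → ℝ) (π₁ : ℕ → A₁ → ℝ) (π₂ : ℕ → A₂ → ℝ) : Prop :=
  π₁ 0 = π₁ref ∧ π₂ 0 = π₂ref ∧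
  (∀ t : ℕ, ∀ a₁ : A₁, π₁ (t + 1) a₁
    = (π₁ t a₁ ^ (1 - γ t / η)
        * Real.exp (γ t * ∑ a₂, π₂ t a₂ * Q (a₁, a₂))
        * π₁ref a₁ ^ (γ t / η))
      / ∑ b₁, (π₁ t b₁ ^ (1 - γ t / η)
        * Real.exp (γ t * ∑ a₂, π₂ t a₂ * Q (b₁, a₂))
        * π₁ref b₁ ^ (γ t / η))) ∧
  (∀ t : ℕ, ∀ a₂ : A₂, π₂ (t + 1) a₂
    = (π₂ t a₂ ^ (1 - γ t / η)
        * Real.exp (-(γ t) * ∑ a₁, π₁ t a₁ * Q (a₁, a₂))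
        * π₂ref a₂ ^ (γ t / η))
      / ∑ b₂, (π₂ t b₂ ^ (1 - γ t / η)
        * Real.exp (-(γ t) * ∑ a₁, π₁ t a₁ * Q (a₁, b₂))
        * π₂ref b₂ ^ (γ t / η)))

open Finset ProbabilityTheory MeasureTheory InformationTheory
open Real (exp log)

section Simplex

variable {A : Type*} [Fintype A]

noncomputable def tilt (π g : A → ℝ) : A → ℝ :=
  fun a => π a * exp (g a) / ∑ b, π b * exp (g b)

lemma abs_sum_mul_le {w f : A → ℝ} {B : ℝ} (hw : IsSimplex w) (hf : ∀ a, |f a| ≤ B) :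
    |∑ a, w a * f a| ≤ B :=
  calc |∑ a, w a * f a| ≤ ∑ a, w a * |f a| := by
        refine (abs_sum_le_sum_abs _ _).trans_eq (sum_congr rfl fun a _ => ?_)
        rw [abs_mul, abs_of_nonneg (hw.1 a)]
    _ ≤ ∑ a, w a * B := sum_le_sum fun a _ => mul_le_mul_of_nonneg_left (hf a) (hw.1 a)
    _ = B := by rw [← sum_mul, hw.2, one_mul]

lemma KLdiv_self {p : A → ℝ} (hp : ∀ a, 0 < p a) : KLdiv p p = 0 :=
  sum_eq_zero fun a _ => by rw [div_self (hp a).ne', Real.log_one, mul_zero]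

lemma KLdiv_eq_sum_mul_klFun {p q : A → ℝ} (hp1 : ∑ a, p a = 1) (hq : ∀ a, 0 < q a)
    (hq1 : ∑ a, q a = 1) : KLdiv p q = ∑ a, q a * klFun (p a / q a) := by
  have hterm : ∀ a, q a * klFun (p a / q a)
      = p a * log (p a / q a) + (q a - p a) := fun a => by
    have hpq : q a * (p a / q a) = p a := mul_div_cancel₀ _ (hq a).ne'
    rw [klFun_apply]
    linear_combination (log (p a / q a) - 1) * hpq
  simp only [hterm, sum_add_distrib, sum_sub_distrib, hp1, hq1, sub_self, add_zero, KLdiv]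

lemma KLdiv_nonneg {p q : A → ℝ} (hp : IsSimplex p) (hq : ∀ a, 0 < q a) (hq1 : ∑ a, q a = 1) :
    0 ≤ KLdiv p q := by
  rw [KLdiv_eq_sum_mul_klFun hp.2 hq hq1]
  exact sum_nonneg fun a _ =>
    mul_nonneg (hq a).le (klFun_nonneg (div_nonneg (hp.1 a) (hq a).le))

lemma eq_of_KLdiv_nonpos {p q : A → ℝ} (hp : IsSimplex p) (hq : ∀ a, 0 < q a)
    (hq1 : ∑ a, q a = 1) (h : KLdiv p q ≤ 0) : p = q := by
  have hnonneg : ∀ a ∈ univ, 0 ≤ q a * klFun (p a / q a) := fun a _ =>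
    mul_nonneg (hq a).le (klFun_nonneg (div_nonneg (hp.1 a) (hq a).le))
  rw [KLdiv_eq_sum_mul_klFun hp.2 hq hq1] at h
  have hzero := (sum_eq_zero_iff_of_nonneg hnonneg).1 (le_antisymm h (sum_nonneg hnonneg))
  funext a
  have hkl := (mul_eq_zero.1 (hzero a (mem_univ a))).resolve_left (hq a).ne'
  rw [klFun_eq_zero_iff (div_nonneg (hp.1 a) (hq a).le),
    div_eq_one_iff_eq (hq a).ne'] at hkl
  exact hkl

lemma sum_sub_mul_log_div (p q : A → ℝ) :
    ∑ a, (p a - q a) * log (p a / q a) = KLdiv p q + KLdiv q p := by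
  rw [KLdiv, KLdiv, ← sum_add_distrib]
  refine sum_congr rfl fun a _ => ?_
  rw [← inv_div, Real.log_inv]
  ring

/-- Hoeffding's lemma for a finitely supported distribution `w`. -/
lemma sum_mul_exp_le_exp_sum_mul_add {w g : A → ℝ} (hw : IsSimplex w) {lo hi : ℝ}
    (hg : ∀ a, g a ∈ Set.Icc lo hi) :
    ∑ a, w a * exp (g a) ≤ exp (∑ a, w a * g a + (hi - lo) ^ 2 / 8) := by
  let _ : MeasurableSpace A := ⊤
  have : DiscreteMeasurableSpace A := ⟨fun _ => trivial⟩
  let p := PMF.ofFintype (fun a => ENNReal.ofReal (w a)) (by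
    rw [← ENNReal.ofReal_sum_of_nonneg (fun a _ => hw.1 a), hw.2, ENNReal.ofReal_one])
  have hp : ∀ a, (p a).toReal = w a := fun a => by simp [p, hw.1 a]
  have hmgf := (hasSubgaussianMGF_of_mem_Icc (X := g) (μ := p.toMeasure)
    Measurable.of_discrete.aemeasurable (ae_of_all _ hg)).mgf_le 1
  have hc : (((‖hi - lo‖₊ / 2) ^ 2 : NNReal) : ℝ) * 1 ^ 2 / 2 = (hi - lo) ^ 2 / 8 := by
    push_cast
    rw [Real.norm_eq_abs, div_pow, sq_abs]
    ring
  simp only [mgf, PMF.integral_eq_sum, hp, smul_eq_mul, one_mul, Real.exp_sub, mul_div_assoc',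
    ← sum_div, hc] at hmgf
  rwa [Real.exp_add, ← div_le_iff₀' (Real.exp_pos _)]

variable [Nonempty A] {π : A → ℝ}

lemma sum_mul_exp_pos (hπ : ∀ a, 0 < π a) (g : A → ℝ) : 0 < ∑ b, π b * exp (g b) :=
  sum_pos (fun b _ => mul_pos (hπ b) (Real.exp_pos _)) univ_nonempty

lemma tilt_pos (hπ : ∀ a, 0 < π a) (g : A → ℝ) (a : A) : 0 < tilt π g a :=
  div_pos (mul_pos (hπ a) (Real.exp_pos _)) (sum_mul_exp_pos hπ g)

lemma sum_tilt (hπ : ∀ a, 0 < π a) (g : A → ℝ) : ∑ a, tilt π g a = 1 := by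
  unfold tilt
  rw [← sum_div, div_self (sum_mul_exp_pos hπ g).ne']

lemma isSimplex_tilt (hπ : ∀ a, 0 < π a) (g : A → ℝ) : IsSimplex (tilt π g) :=
  ⟨fun a => (tilt_pos hπ g a).le, sum_tilt hπ g⟩

lemma log_tilt_div (hπ : ∀ a, 0 < π a) (g : A → ℝ) (a : A) :
    log (tilt π g a / π a) = g a - log (∑ b, π b * exp (g b)) := by
  have hZ := sum_mul_exp_pos hπ g
  have h : tilt π g a / π a = exp (g a) / ∑ b, π b * exp (g b) := by
    unfold tilt
    field_simp [(hπ a).ne']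
  rw [h, Real.log_div (Real.exp_pos _).ne' hZ.ne', Real.log_exp]

lemma KLdiv_tilt (hπ : ∀ a, 0 < π a) (g : A → ℝ) {μ : A → ℝ} (hμ1 : ∑ a, μ a = 1) :
    KLdiv μ (tilt π g) = KLdiv μ π - ∑ a, μ a * g a + log (∑ b, π b * exp (g b)) := by
  have hterm : ∀ a, μ a * log (μ a / tilt π g a)
      = μ a * log (μ a / π a) - μ a * g a + μ a * log (∑ b, π b * exp (g b)) := fun a => by
    rcases eq_or_ne (μ a) 0 with h0 | h0
    · simp [h0]
    · have h := log_tilt_div hπ g a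
      rw [Real.log_div (tilt_pos hπ g a).ne' (hπ a).ne'] at h
      rw [Real.log_div h0 (tilt_pos hπ g a).ne', Real.log_div h0 (hπ a).ne']
      linear_combination (-μ a) * h
  simp only [KLdiv, hterm, sum_add_distrib, sum_sub_distrib, ← sum_mul, hμ1, one_mul]

/-- Gibbs' variational principle. -/
lemma eq_tilt_of_forall_le (hπ : ∀ a, 0 < π a) {g μs : A → ℝ} (hμs : IsSimplex μs)
    (hmax : ∀ μ, IsSimplex μ → ∑ a, μ a * g a - KLdiv μ π ≤ ∑ a, μs a * g a - KLdiv μs π) :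
    μs = tilt π g := by
  have h := hmax _ (isSimplex_tilt hπ g)
  have h0 := KLdiv_self (tilt_pos hπ g)
  rw [KLdiv_tilt hπ g (sum_tilt hπ g)] at h0
  refine eq_of_KLdiv_nonpos hμs (tilt_pos hπ g) (sum_tilt hπ g) ?_
  rw [KLdiv_tilt hπ g hμs.2]
  linarith

lemma KLdiv_tilt_le (hπ : IsSimplex π) (hπpos : ∀ a, 0 < π a) {μ G : A → ℝ}
    (hμ1 : ∑ a, μ a = 1) {lo hi : ℝ} (hG : ∀ a, G a ∈ Set.Icc lo hi) :
    KLdiv μ (tilt π G) ≤ KLdiv μ π - ∑ a, (μ a - π a) * G a + (hi - lo) ^ 2 / 8 := by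
  have hZ := Real.log_le_log (sum_mul_exp_pos hπpos G) (sum_mul_exp_le_exp_sum_mul_add hπ hG)
  rw [Real.log_exp] at hZ
  rw [KLdiv_tilt hπpos G hμ1]
  simp only [sub_mul, sum_sub_distrib]
  linarith

end Simplex

section MirrorStep

variable {A : Type*} [Fintype A]

noncomputable def mdStep (η γ : ℝ) (πref π q : A → ℝ) : A → ℝ :=
  tilt π fun a => γ * (q a - η⁻¹ * log (π a / πref a))

lemma rpow_mul_exp_mul_rpow_eq {x r : ℝ} (hx : 0 < x) (hr : 0 < r) (η γ v : ℝ) :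
    x ^ (1 - γ / η) * exp (γ * v) * r ^ (γ / η) = x * exp (γ * (v - η⁻¹ * log (x / r))) := by
  rw [Real.rpow_def_of_pos hx, Real.rpow_def_of_pos hr, ← Real.exp_add, ← Real.exp_add,
    ← Real.exp_log hx, ← Real.exp_add, Real.exp_log hx, Real.log_div hx.ne' hr.ne']
  ring_nf

lemma normalize_rpow_mul_exp_mul_rpow_eq_mdStep {η γ : ℝ} {πref π : A → ℝ}
    (hπref : ∀ a, 0 < πref a) (hπ : ∀ a, 0 < π a) (q : A → ℝ) :
    (fun a => π a ^ (1 - γ / η) * exp (γ * q a) * πref a ^ (γ / η)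
      / ∑ b, π b ^ (1 - γ / η) * exp (γ * q b) * πref b ^ (γ / η)) = mdStep η γ πref π q := by
  simp only [rpow_mul_exp_mul_rpow_eq (hπ _) (hπref _)]
  rfl

def IsLogRatioBounded (r : ℝ) (πref π : A → ℝ) : Prop :=
  (∀ a, 0 < π a) ∧ ∑ a, π a = 1 ∧ ∃ c, ∀ a, |log (π a / πref a) - c| ≤ r

lemma IsLogRatioBounded.isSimplex {r : ℝ} {πref π : A → ℝ} (h : IsLogRatioBounded r πref π) :
    IsSimplex π :=
  ⟨fun a => (h.1 a).le, h.2.1⟩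

lemma isLogRatioBounded_self {r : ℝ} (hr : 0 ≤ r) {πref : A → ℝ} (hpos : ∀ a, 0 < πref a)
    (h1 : ∑ a, πref a = 1) : IsLogRatioBounded r πref πref :=
  ⟨hpos, h1, 0, fun a => by simpa [div_self (hpos a).ne'] using hr⟩

variable [Nonempty A] {η γ B : ℝ} {πref π q : A → ℝ}

lemma IsLogRatioBounded.mdStep (hη : 0 < η) (hγ : 0 ≤ γ) (hγη : γ ≤ η)
    (hπref : ∀ a, 0 < πref a) (hπ : IsLogRatioBounded (η * B) πref π) (hq : ∀ a, |q a| ≤ B) :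
    IsLogRatioBounded (η * B) πref (mdStep η γ πref π q) := by
  obtain ⟨hπpos, -, c, hc⟩ := hπ
  set G := fun a => γ * (q a - η⁻¹ * log (π a / πref a))
  refine ⟨tilt_pos hπpos G, sum_tilt hπpos G,
    (1 - γ / η) * c - log (∑ b, π b * exp (G b)), fun a => ?_⟩
  change |log (tilt π G a / πref a) - _| ≤ _
  have hlog : log (tilt π G a / πref a) - ((1 - γ / η) * c - log (∑ b, π b * exp (G b)))
      = (1 - γ / η) * (log (π a / πref a) - c) + γ * q a := by
    have hsplit : log (tilt π G a / πref a) = log (tilt π G a / π a) + log (π a / πref a) := by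
      rw [Real.log_div (tilt_pos hπpos G a).ne' (hπref a).ne',
        Real.log_div (tilt_pos hπpos G a).ne' (hπpos a).ne',
        Real.log_div (hπpos a).ne' (hπref a).ne']
      ring
    rw [hsplit, log_tilt_div hπpos G a, div_eq_mul_inv γ η]
    ring
  have hcoef : 0 ≤ 1 - γ / η := sub_nonneg.2 ((div_le_one hη).2 hγη)
  rw [hlog]
  calc |(1 - γ / η) * (log (π a / πref a) - c) + γ * q a|
      ≤ (1 - γ / η) * (η * B) + γ * B := by
        refine (abs_add_le _ _).trans (add_le_add ?_ ?_)
        · rw [abs_mul, abs_of_nonneg hcoef]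
          exact mul_le_mul_of_nonneg_left (hc a) hcoef
        · rw [abs_mul, abs_of_nonneg hγ]
          exact mul_le_mul_of_nonneg_left (hq a) hγ
    _ = η * B := by field_simp; ring

lemma sum_sub_mul_regularized_payoff_eq (hη : η ≠ 0) (hπref : ∀ a, 0 < πref a)
    (hπ : ∀ a, 0 < π a) (hπ1 : ∑ a, π a = 1) {μ q' : A → ℝ}
    (hμ : μ = tilt πref fun a => η * q' a) (q : A → ℝ) :
    ∑ a, (μ a - π a) * (q a - η⁻¹ * log (π a / πref a)) =
      ∑ a, (μ a - π a) * (q a - q' a) + η⁻¹ * (KLdiv μ π + KLdiv π μ) := by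
  have hμpos : ∀ a, 0 < μ a := hμ ▸ tilt_pos hπref _
  have hμ1 : ∑ a, μ a = 1 := hμ ▸ sum_tilt hπref _
  set Z := ∑ b, πref b * exp (η * q' b)
  have hlog : ∀ a, η⁻¹ * log (π a / πref a) = q' a - η⁻¹ * log (μ a / π a) - η⁻¹ * log Z := by
    intro a
    have h := log_tilt_div hπref (fun a => η * q' a) a
    rw [← hμ, Real.log_div (hμpos a).ne' (hπref a).ne'] at h
    rw [Real.log_div (hπ a).ne' (hπref a).ne', Real.log_div (hμpos a).ne' (hπ a).ne']
    calc η⁻¹ * (log (π a) - log (πref a))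
        = η⁻¹ * ((η * q' a - log Z) - (log (μ a) - log (π a))) := by rw [← h]; ring
      _ = _ := by rw [mul_sub, mul_sub, inv_mul_cancel_left₀ hη]; ring
  have hterm : ∀ a, (μ a - π a) * (q a - η⁻¹ * log (π a / πref a))
      = (μ a - π a) * (q a - q' a) + η⁻¹ * ((μ a - π a) * log (μ a / π a))
        + η⁻¹ * log Z * (μ a - π a) := fun a => by rw [hlog]; ring
  simp only [hterm, sum_add_distrib, ← mul_sum, sum_sub_distrib, hμ1, hπ1, sub_self, mul_zero,
    add_zero, sum_sub_mul_log_div]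

lemma KLdiv_mdStep_le (hη : 0 < η) (hγ : 0 ≤ γ) (hπref : ∀ a, 0 < πref a)
    (hπ : IsLogRatioBounded (η * B) πref π) (hq : ∀ a, |q a| ≤ B) {μ q' : A → ℝ}
    (hμ : μ = tilt πref fun a => η * q' a) :
    KLdiv μ (mdStep η γ πref π q) ≤
      (1 - γ / η) * KLdiv μ π - γ * ∑ a, (μ a - π a) * (q a - q' a) + 2 * γ ^ 2 * B ^ 2 := by
  obtain ⟨hπpos, hπ1, c, hc⟩ := hπ
  have hG : ∀ a, γ * (q a - η⁻¹ * log (π a / πref a))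
      ∈ Set.Icc (γ * (-2 * B - η⁻¹ * c)) (γ * (2 * B - η⁻¹ * c)) := by
    intro a
    have hL : |η⁻¹ * log (π a / πref a) - η⁻¹ * c| ≤ B := by
      rw [← mul_sub, abs_mul, abs_of_pos (inv_pos.2 hη), inv_mul_le_iff₀ hη]
      exact hc a
    obtain ⟨hq₁, hq₂⟩ := abs_le.1 (hq a)
    obtain ⟨hL₁, hL₂⟩ := abs_le.1 hL
    constructor <;> apply mul_le_mul_of_nonneg_left _ hγ <;> linarith
  have hstep := KLdiv_tilt_le ⟨fun a => (hπpos a).le, hπ1⟩ hπpos (hμ ▸ sum_tilt hπref _) hG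
  have hid := sum_sub_mul_regularized_payoff_eq hη.ne' hπref hπpos hπ1 hμ q
  have hKL : 0 ≤ KLdiv π μ :=
    KLdiv_nonneg ⟨fun a => (hπpos a).le, hπ1⟩ (hμ ▸ tilt_pos hπref _) (hμ ▸ sum_tilt hπref _)
  simp only [mul_left_comm _ γ, ← mul_sum, hid] at hstep
  rw [mdStep]
  have hγKL : 0 ≤ γ * η⁻¹ * KLdiv π μ := mul_nonneg (mul_nonneg hγ (inv_nonneg.2 hη.le)) hKL
  rw [div_eq_mul_inv]
  linarith

end MirrorStep

lemma le_div_of_le_mul_add_div_sq {D : ℕ → ℝ} {C : ℝ} (hC : 0 ≤ C)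
    (h : ∀ t : ℕ, D (t + 1) ≤ t / (t + 2) * D t + C / (t + 2) ^ 2) (T : ℕ) (hT : 1 ≤ T) :
    D T ≤ C / (T + 1) := by
  induction T, hT using Nat.le_induction with
  | base =>
    have h0 := h 0
    norm_num at h0 ⊢
    linarith
  | succ T _ ih =>
    have hgap : C / (T + 2) - (T / (T + 2) * (C / (T + 1)) + C / (T + 2) ^ 2)
        = C / ((T + 1) * (T + 2) ^ 2) := by
      field_simp
      ring
    have hstep := mul_le_mul_of_nonneg_left ih (by positivity : (0 : ℝ) ≤ T / (T + 2))
    have hpos : 0 ≤ C / ((T + 1) * (T + 2) ^ 2) := by positivity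
    have hcast : ((T + 1 : ℕ) : ℝ) + 1 = T + 2 := by push_cast; ring
    rw [hcast]
    linarith [h T]

section Game

variable {A₁ A₂ : Type*} [Fintype A₁] [Fintype A₂]

lemma payoff_cross_terms_cancel (Q : A₁ × A₂ → ℝ)
    (μ μ' : A₁ → ℝ) (ν ν' : A₂ → ℝ) :
    ∑ a, (μ a - μ' a) * (∑ b, ν' b * Q (a, b) - ∑ b, ν b * Q (a, b))
      + ∑ b, (ν b - ν' b) * (-∑ a, μ' a * Q (a, b) - -∑ a, μ a * Q (a, b)) = 0 := by
  simp only [← sum_sub_distrib, ← sub_mul, mul_sum, neg_sub_neg]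
  rw [sum_comm (f := fun b a => (ν b - ν' b) * ((μ a - μ' a) * Q (a, b))), ← sum_add_distrib]
  refine sum_eq_zero fun a _ => ?_
  rw [← sum_add_distrib]
  exact sum_eq_zero fun b _ => by ring

variable {Q : A₁ × A₂ → ℝ} {η : ℝ} {π₁ref : A₁ → ℝ} {π₂ref : A₂ → ℝ} {μs : A₁ → ℝ}
  {νs : A₂ → ℝ}

lemma IsSaddle.fst_eq_tilt [Nonempty A₁] (hη : 0 < η) (hpos : ∀ a, 0 < π₁ref a)
    (h : IsSaddle Q η π₁ref π₂ref μs νs) :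
    μs = tilt π₁ref fun a => η * ∑ b, νs b * Q (a, b) := by
  have hJ : ∀ μ, ∑ a, μ a * (η * ∑ b, νs b * Q (a, b)) - KLdiv μ π₁ref
      = η * (J Q η π₁ref π₂ref μ νs - η⁻¹ * KLdiv νs π₂ref) := fun μ => by
    have hbil : ∑ a, μ a * (η * ∑ b, νs b * Q (a, b)) = η * ∑ a, ∑ b, μ a * νs b * Q (a, b) := by
      simp only [mul_sum]
      exact sum_congr rfl fun a _ => sum_congr rfl fun b _ => by ring
    rw [hbil, J]
    field_simp
    ring
  refine eq_tilt_of_forall_le hpos h.1 fun μ hμ => ?_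
  rw [hJ, hJ]
  exact mul_le_mul_of_nonneg_left (by linarith [h.2.2.1 μ hμ]) hη.le

lemma IsSaddle.snd_eq_tilt [Nonempty A₂] (hη : 0 < η) (hpos : ∀ b, 0 < π₂ref b)
    (h : IsSaddle Q η π₁ref π₂ref μs νs) :
    νs = tilt π₂ref fun b => η * -∑ a, μs a * Q (a, b) := by
  have hJ : ∀ ν, ∑ b, ν b * (η * -∑ a, μs a * Q (a, b)) - KLdiv ν π₂ref
      = -η * (J Q η π₁ref π₂ref μs ν + η⁻¹ * KLdiv μs π₁ref) := fun ν => by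
    have hbil : ∑ b, ν b * (η * -∑ a, μs a * Q (a, b))
        = -(η * ∑ a, ∑ b, μs a * ν b * Q (a, b)) := by
      simp only [mul_neg, sum_neg_distrib, mul_sum]
      rw [sum_comm]
      exact congrArg _ (sum_congr rfl fun a _ => sum_congr rfl fun b _ => by ring)
    rw [hbil, J]
    field_simp
    ring
  refine eq_tilt_of_forall_le hpos h.2.1 fun ν hν => ?_
  rw [hJ, hJ]
  exact mul_le_mul_of_nonpos_left (by linarith [h.2.2.2 ν hν]) (neg_nonpos.2 hη.le)

end Game

namespace IsSOSMD

variable {A₁ A₂ : Type*} [Fintype A₁] [Fintype A₂] {Q : A₁ × A₂ → ℝ} {η : ℝ}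
  {π₁ref : A₁ → ℝ} {π₂ref : A₂ → ℝ} {γ : ℕ → ℝ} {π₁ : ℕ → A₁ → ℝ} {π₂ : ℕ → A₂ → ℝ}

lemma succ_fst (h : IsSOSMD Q η π₁ref π₂ref γ π₁ π₂) (hpos : ∀ a, 0 < π₁ref a) {t : ℕ}
    (ht : ∀ a, 0 < π₁ t a) :
    π₁ (t + 1) = mdStep η (γ t) π₁ref (π₁ t) fun a => ∑ b, π₂ t b * Q (a, b) := by
  rw [← normalize_rpow_mul_exp_mul_rpow_eq_mdStep hpos ht]
  exact funext (h.2.2.1 t)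

lemma succ_snd (h : IsSOSMD Q η π₁ref π₂ref γ π₁ π₂) (hpos : ∀ b, 0 < π₂ref b) {t : ℕ}
    (ht : ∀ b, 0 < π₂ t b) :
    π₂ (t + 1) = mdStep η (γ t) π₂ref (π₂ t) fun b => -∑ a, π₁ t a * Q (a, b) := by
  rw [← normalize_rpow_mul_exp_mul_rpow_eq_mdStep hpos ht]
  simp only [mul_neg, ← neg_mul]
  exact funext (h.2.2.2 t)

lemma isLogRatioBounded [Nonempty A₁] [Nonempty A₂] (h : IsSOSMD Q η π₁ref π₂ref γ π₁ π₂)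
    {B : ℝ} (hQ : ∀ a₁ a₂, |Q (a₁, a₂)| ≤ B) (hη : 0 < η) (hγ : ∀ t, 0 ≤ γ t ∧ γ t ≤ η)
    (h₁ : IsSimplex π₁ref) (h₂ : IsSimplex π₂ref)
    (h₁pos : ∀ a, 0 < π₁ref a) (h₂pos : ∀ b, 0 < π₂ref b) (t : ℕ) :
    IsLogRatioBounded (η * B) π₁ref (π₁ t) ∧ IsLogRatioBounded (η * B) π₂ref (π₂ t) := by
  induction t with
  | zero =>
    have hB : 0 ≤ η * B := mul_nonneg hη.le
      ((abs_nonneg _).trans (hQ (Classical.arbitrary A₁) (Classical.arbitrary A₂)))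
    rw [h.1, h.2.1]
    exact ⟨isLogRatioBounded_self hB h₁pos h₁.2, isLogRatioBounded_self hB h₂pos h₂.2⟩
  | succ t ih =>
    obtain ⟨hb₁, hb₂⟩ := ih
    rw [h.succ_fst h₁pos hb₁.1, h.succ_snd h₂pos hb₂.1]
    exact ⟨hb₁.mdStep hη (hγ t).1 (hγ t).2 h₁pos fun a => abs_sum_mul_le hb₂.isSimplex (hQ a),
      hb₂.mdStep hη (hγ t).1 (hγ t).2 h₂pos fun b =>
        (abs_neg _).trans_le (abs_sum_mul_le hb₁.isSimplex fun a => hQ a b)⟩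

end IsSOSMD

/-- last-iterate KL convergence of the SOS-MD self-play iterates with
stepsizes `γ_t = 2η/(t+2)` to the unique saddle point of the KL-regularized game:
`KL(μ̂‖π₁⁽ᵀ⁾) + KL(ν̂‖π₂⁽ᵀ⁾) ≤ 36 η² B² / (T+1)` for every `T ≥ 1`. -/
theorem stmt16 {A₁ A₂ : Type*} [Fintype A₁] [Fintype A₂] [Nonempty A₁] [Nonempty A₂]
    (Q : A₁ × A₂ → ℝ) (B : ℝ) (hQ : ∀ a₁ a₂, |Q (a₁, a₂)| ≤ B)
    (η : ℝ) (hη : 0 < η)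
    (π₁ref : A₁ → ℝ) (π₂ref : A₂ → ℝ)
    (h₁ : IsSimplex π₁ref) (h₂ : IsSimplex π₂ref)
    (h₁pos : ∀ a, 0 < π₁ref a) (h₂pos : ∀ a, 0 < π₂ref a)
    (μhat : A₁ → ℝ) (νhat : A₂ → ℝ)
    (hsaddle : IsSaddle Q η π₁ref π₂ref μhat νhat)
    (γ : ℕ → ℝ) (hγ : ∀ t : ℕ, γ t = 2 * η / ((t : ℝ) + 2))
    (π₁ : ℕ → A₁ → ℝ) (π₂ : ℕ → A₂ → ℝ)
    (hsos : IsSOSMD Q η π₁ref π₂ref γ π₁ π₂) :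
    ∀ T : ℕ, 1 ≤ T →
      KLdiv μhat (π₁ T) + KLdiv νhat (π₂ T)
        ≤ 36 * η^2 * B^2 / ((T : ℝ) + 1) := by
  have hγη : ∀ t, 0 ≤ γ t ∧ γ t ≤ η := fun t => by
    rw [hγ, div_le_iff₀ (by positivity)]
    exact ⟨by positivity, by nlinarith [t.cast_nonneg (α := ℝ)]⟩
  have hμ := hsaddle.fst_eq_tilt hη h₁pos
  have hν := hsaddle.snd_eq_tilt hη h₂pos
  have hrec : ∀ t : ℕ, KLdiv μhat (π₁ (t + 1)) + KLdiv νhat (π₂ (t + 1))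
      ≤ t / (t + 2) * (KLdiv μhat (π₁ t) + KLdiv νhat (π₂ t))
        + 16 * η ^ 2 * B ^ 2 / (t + 2) ^ 2 := by
    intro t
    obtain ⟨hb₁, hb₂⟩ := hsos.isLogRatioBounded hQ hη hγη h₁ h₂ h₁pos h₂pos t
    have hKL₁ := KLdiv_mdStep_le hη (hγη t).1 h₁pos hb₁
      (fun a => abs_sum_mul_le hb₂.isSimplex (hQ a)) hμ
    have hKL₂ := KLdiv_mdStep_le hη (hγη t).1 h₂pos hb₂
      (fun b => (abs_neg _).trans_le (abs_sum_mul_le hb₁.isSimplex fun a => hQ a b)) hν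
    have hcancel :=
      payoff_cross_terms_cancel Q μhat (π₁ t) νhat (π₂ t)
    have hcoef : 1 - γ t / η = t / (t + 2) := by
      rw [hγ]
      field_simp
      ring
    have herr : 4 * γ t ^ 2 * B ^ 2 = 16 * η ^ 2 * B ^ 2 / (t + 2) ^ 2 := by
      rw [hγ]
      field_simp
      ring
    rw [hsos.succ_fst h₁pos hb₁.1, hsos.succ_snd h₂pos hb₂.1, ← hcoef, ← herr]
    linear_combination hKL₁ + hKL₂ - γ t * hcancel
  intro T hT
  calc KLdiv μhat (π₁ T) + KLdiv νhat (π₂ T) ≤ 16 * η ^ 2 * B ^ 2 / (T + 1) :=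
        le_div_of_le_mul_add_div_sq (D := fun t => KLdiv μhat (π₁ t) + KLdiv νhat (π₂ t))
          (by positivity) hrec T hT
    _ ≤ 36 * η ^ 2 * B ^ 2 / (T + 1) := by gcongr; norm_num
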